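/- arXiv:2505.16560 — 3 statements merged into one kernel-verified Lean document; each statement's English description precedes it below -/
import Mathlib

section
/- Let A be a proper connective dg algebra over a field k, D^fd(A) the derived category of dg A-modules with finite-dimensional total cohomology, with its standard t-structure. If P is an object of D^fd(A)^{≤0} with Hom(P, M[1]) = 0 for all M ∈ D^fd(A)^{≤0} (i.e. P is derived projective), then H^0(P) is a finitely generated projective H^0(A)-module. -/
/-!
Since `Hom(A, P)` is finite dimensional, finitely many maps `A ⟶ P` span it; let
`f : A^n ⟶ P` be their sum and `Z` its cone. Then `Z ∈ D^{≤0}`, and `Hom(A, Z) = 0` because `A`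
is derived projective and `Hom(A, f)` is onto. As `A` generates, an object of `D^{≤0}` admitting
no nonzero map from `A` lies in `D^{≤-1}`; derived projectivity of `P` then kills `P ⟶ Z`, so `f`
splits and `P ∈ add A`. Applying `H^0` exhibits `H^0(P)` as a direct summand of
`H^0(A)^n ≅ B^n`.
-/

open CategoryTheory Category Limits Pretriangulated Triangulated ZeroObject

universe w v u

namespace Paper

section Defs

variable {C : Type u} [Category.{v} C] [Preadditive C] [HasZeroObject C]
  [HasShift C ℤ] [∀ n : ℤ, (shiftFunctor C n).Additive] [Pretriangulated C]
  [HasFiniteBiproducts C] [HasBinaryBiproducts C]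

/-- `X` lies in `add A`: it is a direct summand of a finite direct sum of copies of `A`. -/
def inAdd (A X : C) : Prop :=
  ∃ (n : ℕ) (s : X ⟶ ⨁ fun _ : Fin n => A) (p : (⨁ fun _ : Fin n => A) ⟶ X), s ≫ p = 𝟙 X

/-- The star operation `S ∗ T` on classes of objects of a (pre)triangulated category:
objects `E` admitting a distinguished triangle `X ⟶ E ⟶ Y ⟶ X⟦1⟧` with `X ∈ S`, `Y ∈ T`. -/
def star (S T : Set C) : Set C :=
  {E | ∃ (X : C) (_ : X ∈ S) (Y : C) (_ : Y ∈ T) (f : X ⟶ E) (g : E ⟶ Y)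
    (h : Y ⟶ X⟦(1 : ℤ)⟧), Triangle.mk f g h ∈ distTriang C}

/-- `add (A⟦i⟧)` as a class of objects. -/
def addShift (A : C) (i : ℤ) : Set C := {X | inAdd (A⟦i⟧) X}

/-- `per(A)^{[-n,0]} = add(A) ∗ add(A)[1] ∗ ⋯ ∗ add(A)[n]`. -/
def perInterval (A : C) : ℕ → Set C
  | 0 => addShift A 0
  | n + 1 => star (perInterval A n) (addShift A (n + 1))

/-- `thick(DA)^{[0,n]} = add(DA)[-n] ∗ ⋯ ∗ add(DA)[-1] ∗ add(DA)`. -/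
def coInterval (DA : C) : ℕ → Set C
  | 0 => addShift DA 0
  | n + 1 => star (addShift DA (-(n + 1 : ℕ))) (coInterval DA n)

/-- The extended heart `H^d = T^{≤ 0} ∩ T^{> -d}`. -/
def Hd (t : TStructure C) (d : ℕ) : Set C := {X | t.le 0 X ∧ t.ge (1 - (d : ℤ)) X}

/-- Projectivity in the extriangulated category given by an extension-closed class `S`:
`E(P, X) = Hom(P, X⟦1⟧)` vanishes for all `X ∈ S`. -/
def projOn (S : Set C) (P : C) : Prop := ∀ X ∈ S, ∀ f : P ⟶ X⟦(1 : ℤ)⟧, f = 0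

/-- Injectivity in the extriangulated category given by an extension-closed class `S`. -/
def injOn (S : Set C) (I : C) : Prop := ∀ X ∈ S, ∀ f : X ⟶ I⟦(1 : ℤ)⟧, f = 0

/-- `p : M ⟶ N` is a deflation for the extriangulated structure on the extension-closed
class `S`: it is the second map of a distinguished triangle with all terms in `S`. -/
def isDeflation (S : Set C) {M N : C} (p : M ⟶ N) : Prop :=
  ∃ (L : C) (_ : L ∈ S) (f : L ⟶ M) (h : N ⟶ L⟦(1 : ℤ)⟧),
    Triangle.mk f p h ∈ distTriang C

/-- `i : L ⟶ M` is an inflation for the extriangulated structure on `S`. -/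
def isInflation (S : Set C) {L M : C} (i : L ⟶ M) : Prop :=
  ∃ (N : C) (_ : N ∈ S) (p : M ⟶ N) (h : N ⟶ L⟦(1 : ℤ)⟧),
    Triangle.mk i p h ∈ distTriang C

/-- `f` factors through an object of `add W`. -/
def factorsThruAdd (W : C) {X Y : C} (f : X ⟶ Y) : Prop :=
  ∃ (Q : C) (_ : inAdd W Q) (a : X ⟶ Q) (b : Q ⟶ Y), f = a ≫ b

/-- An indecomposable object: nonzero, and in any direct sum decomposition one summand
vanishes. -/
def Indec (X : C) : Prop :=
  ¬ IsZero X ∧ ∀ Y Z : C, Nonempty (X ≅ Y ⊞ Z) → IsZero Y ∨ IsZero Z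

/-- Data of the truncation functor `t^{≥ n}`, left adjoint to the inclusion of `T^{≥ n}`,
together with its unit and the truncation triangles. -/
structure TruncGEData (t : TStructure C) (n : ℤ) where
  F : C ⥤ C
  η : 𝟭 C ⟶ F
  ge : ∀ X : C, t.ge n (F.obj X)
  tri : ∀ X : C, ∃ (Z : C) (_ : t.le (n - 1) Z) (f : Z ⟶ X) (h : F.obj X ⟶ Z⟦(1 : ℤ)⟧),
    Triangle.mk f (η.app X) h ∈ distTriang C
  adj : ∀ (X W : C), t.ge n W → Function.Bijective (fun g : F.obj X ⟶ W => η.app X ≫ g)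

/-- Data of the truncation functor `t^{≤ n}`, right adjoint to the inclusion of `T^{≤ n}`,
together with its counit and the truncation triangles. -/
structure TruncLEData (t : TStructure C) (n : ℤ) where
  F : C ⥤ C
  ε : F ⟶ 𝟭 C
  le : ∀ X : C, t.le n (F.obj X)
  tri : ∀ X : C, ∃ (Z : C) (_ : t.ge (n + 1) Z) (g : X ⟶ Z) (h : Z ⟶ (F.obj X)⟦(1 : ℤ)⟧),
    Triangle.mk (ε.app X) g h ∈ distTriang C
  adj : ∀ (W X : C), t.le n W → Function.Bijective (fun g : W ⟶ F.obj X => g ≫ ε.app X)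

/-- Membership in the thick subcategory generated by `A`. -/
inductive thickMem (A : C) : C → Prop
  | base : thickMem A A
  | zero : thickMem A 0
  | iso {X Y : C} : (X ≅ Y) → thickMem A X → thickMem A Y
  | shift (X : C) (n : ℤ) : thickMem A X → thickMem A (X⟦n⟧)
  | ext₂ {X Y Z : C} {f : X ⟶ Y} {g : Y ⟶ Z} {h : Z ⟶ X⟦(1 : ℤ)⟧} :
      (Triangle.mk f g h ∈ distTriang C) → thickMem A X → thickMem A Z → thickMem A Y
  | smd {X Y : C} (s : X ⟶ Y) (p : Y ⟶ X) : s ≫ p = 𝟙 X → thickMem A Y → thickMem A X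

end Defs

/-- Abstraction of the derived category `D^fd(A)` of a proper connective dg algebra `A`
over a field `k`, with its standard t-structure: `A` is connective (cohomology in
non-positive degrees), Hom-spaces are finite dimensional (properness), the standard
t-structure is bounded on `D^fd`, `A` is derived projective and `A` generates. -/
structure DGSetup (k : Type w) [Field k] (C : Type u) [Category.{v} C] [Preadditive C]
    [HasZeroObject C] [HasShift C ℤ] [∀ n : ℤ, (shiftFunctor C n).Additive]
    [Pretriangulated C] [Linear k C] where
  t : TStructure C
  A : C
  connective : t.le 0 A
  homFinite : ∀ X Y : C, FiniteDimensional k (X ⟶ Y)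
  bounded : ∀ X : C, ∃ a b : ℤ, t.ge a X ∧ t.le b X
  A_derived_projective : ∀ X : C, t.le 0 X → ∀ f : A ⟶ X⟦(1 : ℤ)⟧, f = 0
  generates : ∀ X : C, (∀ (n : ℤ) (f : A⟦n⟧ ⟶ X), f = 0) → IsZero X

section DG

variable {k : Type w} [Field k] {C : Type u} [Category.{v} C] [Preadditive C]
  [HasZeroObject C] [HasShift C ℤ] [∀ n : ℤ, (shiftFunctor C n).Additive]
  [Pretriangulated C] [Linear k C]

/-- A derived injective object of `D^fd(A)^{≥ 0}`. -/
def DerivedInjective (S : DGSetup k C) (I : C) : Prop :=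
  S.t.ge 0 I ∧ ∀ X : C, S.t.ge 0 X → ∀ f : X ⟶ I⟦(1 : ℤ)⟧, f = 0

variable [HasFiniteBiproducts C] [HasBinaryBiproducts C]

/-- The `k`-submodule of morphisms `X ⟶ Y` factoring through `add W`. -/
def addIdeal (k : Type w) [Field k] [Linear k C] (W : C) (X Y : C) : Submodule k (X ⟶ Y) :=
  Submodule.span k {f | factorsThruAdd W f}

end DG

end Paper

namespace CategoryTheory.Triangulated.TStructure

variable {C : Type*} [Category C] [Preadditive C] [HasZeroObject C] [HasShift C ℤ]
  [∀ n : ℤ, (shiftFunctor C n).Additive] [Pretriangulated C] (t : TStructure C)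

lemma isLE_biproduct {J : Type*} (F : J → C) [HasBiproduct F] (n : ℤ)
    (h : ∀ j, t.IsLE (F j) n) : t.IsLE (⨁ F) n := by
  rw [t.isLE_iff_orthogonal n (n + 1) rfl]
  intro Y f _
  refine biproduct.hom_ext' _ _ fun j => ?_
  rw [comp_zero]
  exact t.zero _ n (n + 1)

lemma isLE_shift_one (X : C) (n : ℤ) [t.IsLE X n] : t.IsLE (X⟦(1 : ℤ)⟧) n :=
  have := t.isLE_shift X n 1 (n - 1)
  t.isLE_of_le _ (n - 1) n

end CategoryTheory.Triangulated.TStructure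

namespace Paper

section DerivedProjective

variable {C : Type*} [Category C] [Preadditive C] [HasZeroObject C] [HasShift C ℤ]
  [∀ n : ℤ, (shiftFunctor C n).Additive] [Pretriangulated C] {t : TStructure C}

lemma projOn.hom_eq_zero_of_isLE {P : C} (hP : projOn {X | t.le 0 X} P) {Y : C}
    [t.IsLE Y (-1)] (f : P ⟶ Y) : f = 0 := by
  let e : Y⟦(-1 : ℤ)⟧⟦(1 : ℤ)⟧ ≅ Y := (shiftEquiv C (1 : ℤ)).counitIso.app Y
  have : f ≫ e.inv = 0 := hP _ (t.le_shift (-1) (-1) 0 (by lia) Y (t.le_of_isLE Y (-1))) _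
  rwa [← cancel_mono e.inv, zero_comp]

lemma projOn.shift_hom_eq_zero_of_isLE {P : C} (hP : projOn {X | t.le 0 X} P) (m : ℤ)
    {Y : C} [t.IsLE Y (-1 - m)] (f : P⟦m⟧ ⟶ Y) : f = 0 := by
  have := t.isLE_shift Y (-1 - m) (-m) (-1)
  let e : P ≅ P⟦m⟧⟦-m⟧ := (shiftEquiv C m).unitIso.app P
  have h : e.hom ≫ (shiftFunctor C (-m)).map f = 0 := hP.hom_eq_zero_of_isLE _
  apply (shiftFunctor C (-m)).map_injective
  rw [Functor.map_zero, ← cancel_epi e.hom, h, comp_zero]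

lemma isZero_of_hom_eq_zero {A W : C} [t.IsLE A 0] (hA : projOn {X | t.le 0 X} A)
    (hgen : ∀ X : C, (∀ (n : ℤ) (f : A⟦n⟧ ⟶ X), f = 0) → IsZero X)
    [t.IsLE W 0] [t.IsGE W 0] (hW : ∀ f : A ⟶ W, f = 0) : IsZero W := by
  refine hgen W fun m f => ?_
  rcases lt_trichotomy m 0 with hm | rfl | hm
  · have : t.IsLE W (-1 - m) := t.isLE_of_le W 0 (-1 - m)
    exact hA.shift_hom_eq_zero_of_isLE m f
  · let e : A⟦(0 : ℤ)⟧ ≅ A := (shiftFunctorZero C ℤ).app A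
    rw [← cancel_epi e.inv, hW (e.inv ≫ f), comp_zero]
  · have : t.IsLE (A⟦m⟧) (-m) := t.isLE_shift A 0 m (-m)
    exact t.zero f (-m) 0

lemma isLE_neg_one_of_hom_eq_zero {A X : C} [t.IsLE A 0] (hA : projOn {X | t.le 0 X} A)
    (hgen : ∀ X : C, (∀ (n : ℤ) (f : A⟦n⟧ ⟶ X), f = 0) → IsZero X)
    [t.IsLE X 0] (hX : ∀ f : A ⟶ X, f = 0) : t.IsLE X (-1) := by
  have hT := t.triangleLTGE_distinguished 0 X
  have := t.isLE_truncLT_obj X 0 0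
  have : t.IsLE ((t.truncGE 0).obj X) 0 := t.isLE₂ _ (rot_of_distTriang _ hT) 0
    (show t.IsLE X 0 from inferInstance) (t.isLE_shift_one ((t.truncLT 0).obj X) 0)
  rw [t.isLE_iff_isZero_truncGE_obj (-1) 0 (by lia)]
  refine isZero_of_hom_eq_zero hA hgen fun f => ?_
  obtain ⟨g, rfl⟩ : ∃ g : A ⟶ X, f = g ≫ (t.truncGEπ 0).app X :=
    Triangle.coyoneda_exact₃ _ hT f (hA _ (t.le_of_isLE ((t.truncLT 0).obj X) 0) _)
  rw [hX g, zero_comp]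

lemma isSplitEpi_of_forall_exists_comp_eq {A Q P : C} [t.IsLE A 0]
    (hA : projOn {X | t.le 0 X} A)
    (hgen : ∀ X : C, (∀ (n : ℤ) (f : A⟦n⟧ ⟶ X), f = 0) → IsZero X)
    [t.IsLE Q 0] [t.IsLE P 0] (hP : projOn {X | t.le 0 X} P) (f : Q ⟶ P)
    (hf : ∀ g : A ⟶ P, ∃ u, u ≫ f = g) : IsSplitEpi f := by
  obtain ⟨Z, g, δ, hT⟩ := distinguished_cocone_triangle f
  have : t.IsLE Z 0 := t.isLE₂ _ (rot_of_distTriang _ hT) 0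
    (show t.IsLE P 0 from inferInstance) (t.isLE_shift_one Q 0)
  have hfg : f ≫ g = 0 := comp_distTriang_mor_zero₁₂ _ hT
  have hZ : ∀ h : A ⟶ Z, h = 0 := fun h => by
    obtain ⟨h', rfl⟩ : ∃ h' : A ⟶ P, h = h' ≫ g :=
      Triangle.coyoneda_exact₃ _ hT h (hA _ (t.le_of_isLE Q 0) _)
    obtain ⟨u, rfl⟩ := hf h'
    rw [assoc, hfg, comp_zero]
  have : t.IsLE Z (-1) := isLE_neg_one_of_hom_eq_zero hA hgen hZ
  obtain ⟨s, hs⟩ := Triangle.coyoneda_exact₂ _ hT (𝟙 P)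
    (show 𝟙 P ≫ g = 0 by rw [hP.hom_eq_zero_of_isLE g, comp_zero])
  exact IsSplitEpi.mk' ⟨s, hs.symm⟩

end DerivedProjective

lemma exists_biproduct_desc_surjective {C : Type*} [Category C] [Preadditive C]
    [HasFiniteBiproducts C] (k : Type*) [Semiring k] [Linear k C] (A P : C)
    [Module.Finite k (A ⟶ P)] :
    ∃ (n : ℕ) (f : (⨁ fun _ : Fin n => A) ⟶ P), ∀ g : A ⟶ P, ∃ u, u ≫ f = g := by
  obtain ⟨n, s, hs⟩ := Module.Finite.exists_fin (R := k) (M := A ⟶ P)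
  refine ⟨n, biproduct.desc s, fun g => ?_⟩
  obtain ⟨c, rfl⟩ := (Submodule.mem_span_range_iff_exists_fun k).1
    (show g ∈ Submodule.span k (Set.range s) from hs ▸ Submodule.mem_top)
  exact ⟨∑ i, c i • biproduct.ι (fun _ : Fin n => A) i,
    by simp only [Preadditive.sum_comp, Linear.smul_comp, biproduct.ι_desc]⟩

lemma inAdd_of_projOn {C : Type*} [Category C] [Preadditive C] [HasZeroObject C]
    [HasShift C ℤ] [∀ n : ℤ, (shiftFunctor C n).Additive] [Pretriangulated C]
    [HasFiniteBiproducts C] (k : Type*) [Semiring k] [Linear k C] {t : TStructure C}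
    {A P : C} [t.IsLE A 0] (hA : projOn {X | t.le 0 X} A)
    (hgen : ∀ X : C, (∀ (n : ℤ) (f : A⟦n⟧ ⟶ X), f = 0) → IsZero X)
    [Module.Finite k (A ⟶ P)] [t.IsLE P 0] (hP : projOn {X | t.le 0 X} P) : inAdd A P := by
  obtain ⟨n, f, hf⟩ := exists_biproduct_desc_surjective k A P
  have := t.isLE_biproduct (fun _ : Fin n => A) 0 fun _ => inferInstance
  have := isSplitEpi_of_forall_exists_comp_eq hA hgen hP f hf
  exact ⟨n, section_ f, f, IsSplitEpi.id f⟩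

lemma finite_projective_of_inAdd {R : Type*} [Ring R] {C : Type*} [Category C] [Preadditive C]
    [HasFiniteBiproducts C] (F : C ⥤ ModuleCat R) [F.Additive] {A X : C}
    [Module.Free R (F.obj A)] [Module.Finite R (F.obj A)] (hX : inAdd A X) :
    Module.Finite R (F.obj X) ∧ Module.Projective R (F.obj X) := by
  obtain ⟨n, s, p, hsp⟩ := hX
  let e : F.obj (⨁ fun _ : Fin n => A) ≅ ModuleCat.of R (Fin n → F.obj A) :=
    F.mapBiproduct _ ≪≫ ModuleCat.biproductIsoPi _
  have : Module.Free R (F.obj (⨁ fun _ : Fin n => A)) := .of_equiv e.toLinearEquiv.symm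
  have : Module.Finite R (F.obj (⨁ fun _ : Fin n => A)) := .equiv e.toLinearEquiv.symm
  have hsplit : (F.map p).hom ∘ₗ (F.map s).hom = LinearMap.id := by
    rw [← ModuleCat.hom_comp, ← F.map_comp, hsp, F.map_id, ModuleCat.hom_id]
  have hp : Function.Surjective (F.map p).hom :=
    Function.LeftInverse.surjective (LinearMap.congr_fun hsplit)
  exact ⟨.of_surjective _ hp, .of_split _ _ hsplit⟩

variable {C : Type u} [Category.{v} C] [Preadditive C] [HasZeroObject C]
  [HasShift C ℤ] [∀ n : ℤ, (shiftFunctor C n).Additive] [Pretriangulated C]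
  [HasFiniteBiproducts C] [HasBinaryBiproducts C]
  {k : Type w} [Field k] [Linear k C]

/-- `B` plays the role of `H^0(A)` and `H0` that of the zeroth cohomology functor. -/
theorem stmt4_general (S : DGSetup k C) (B : Type w) [Ring B]
    (H0 : C ⥤ ModuleCat.{w} B) [H0.Additive]
    (hAfree : Nonempty (H0.obj S.A ≅ ModuleCat.of B B))
    (P : C) (hP : S.t.le 0 P)
    (hproj : ∀ M : C, S.t.le 0 M → ∀ f : P ⟶ M⟦(1 : ℤ)⟧, f = 0) :
    Module.Finite B (H0.obj P) ∧ Module.Projective B (H0.obj P) := by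
  obtain ⟨e⟩ := hAfree
  have : Module.Free B (H0.obj S.A) := .of_equiv e.toLinearEquiv.symm
  have : Module.Finite B (H0.obj S.A) := .equiv e.toLinearEquiv.symm
  have : S.t.IsLE S.A 0 := ⟨S.connective⟩
  have : S.t.IsLE P 0 := ⟨hP⟩
  have := S.homFinite S.A P
  exact finite_projective_of_inAdd H0
    (inAdd_of_projOn k S.A_derived_projective S.generates hproj)

/-- For a proper connective dg algebra `A`, if `P ∈ D^fd(A)^{≤0}` is
derived projective, then `H^0(P)` is a finitely generated projective `H^0(A)`-module.
Here `B` plays the role of `H^0(A)` and `H0` is the zeroth cohomology functor, which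
kills `D^fd(A)^{≥1}` and `D^fd(A)^{≤ -1}` and sends `A` to the free module `B`. -/
theorem stmt4 (S : DGSetup k C) (B : Type w) [Ring B] [Algebra k B] [FiniteDimensional k B]
    (H0 : C ⥤ ModuleCat.{w} B) [H0.Additive]
    (hfin : ∀ X : C, Module.Finite B (H0.obj X))
    (hv1 : ∀ X : C, S.t.ge 1 X → IsZero (H0.obj X))
    (hv2 : ∀ X : C, S.t.le (-1) X → IsZero (H0.obj X))
    (hAfree : Nonempty (H0.obj S.A ≅ ModuleCat.of B B))
    (P : C) (hP : S.t.le 0 P)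
    (hproj : ∀ M : C, S.t.le 0 M → ∀ f : P ⟶ M⟦(1 : ℤ)⟧, f = 0) :
    Module.Finite B (H0.obj P) ∧ Module.Projective B (H0.obj P) :=
  stmt4_general S B H0 hAfree P hP hproj

end Paper
end

section
/- Let A be a proper connective dg algebra and d ≥ 1 with A ∈ H^d := D^fd(A)^{≤0} ∩ D^fd(A)^{>-d}. Then, as an extriangulated category (with E(X,Y) = Hom(X, Y[1])), H^d has enough projectives, and the projective objects are exactly add(A). -/
/-!
`Hom(A, Y⟦j⟧)` plays the role of `H^j(Y)`: it vanishes for `j > n` when `Y ≤ n` because `A` is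
derived projective, for `j < n` when `Y ≥ n` because `A` is connective, and, since `A`
generates, its vanishing for all `j > n` forces `Y ≤ n`.

For `X ∈ H^d`, a basis of the finite-dimensional space `Hom(A, X)` gives a map `p : A^n ⟶ X`
through which every `A ⟶ X` factors. Its cocone `L` is `≥ 1 - d` by extension closure, and
`Hom(A, L⟦1⟧) = 0` because the connecting map kills the image of `Hom(A, p)`, which is everything;
so `L ∈ H^d` and `p` is a deflation. Objects of `add A` are projective since `A` is derived
projective; conversely, for projective `P` the connecting map of this deflation vanishes, so the
deflation splits and `P` is a summand of `A^n`.
-/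

open CategoryTheory Category Limits Pretriangulated Triangulated ZeroObject

universe w v u

namespace Paper

section Add

variable {C : Type u} [Category.{v} C] [Preadditive C] [HasFiniteBiproducts C]

lemma inAdd.of_isSplitEpi {W Q X : C} (hQ : inAdd W Q) (p : Q ⟶ X) [IsSplitEpi p] :
    inAdd W X := by
  obtain ⟨n, s, r, hsr⟩ := hQ
  exact ⟨n, section_ p ≫ s, r ≫ p, by simp [reassoc_of% hsr]⟩

lemma inAdd.eq_zero_of_hom_to {W X B : C} (hX : inAdd W X) (hW : ∀ g : B ⟶ W, g = 0)
    (f : B ⟶ X) : f = 0 := by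
  obtain ⟨n, s, p, hsp⟩ := hX
  have hfs : f ≫ s = 0 := biproduct.hom_ext _ _ fun i => by simpa using hW _
  rw [← comp_id f, ← hsp, reassoc_of% hfs, zero_comp]

lemma inAdd.eq_zero_of_hom_from {W X Z : C} (hX : inAdd W X) (hW : ∀ g : W ⟶ Z, g = 0)
    (f : X ⟶ Z) : f = 0 := by
  obtain ⟨n, s, p, hsp⟩ := hX
  have hpf : p ≫ f = 0 := biproduct.hom_ext' _ _ fun i => by simpa using hW _
  rw [← id_comp f, ← hsp, assoc, hpf, comp_zero]

def IsRightApproximation (W : C) {P X : C} (p : P ⟶ X) : Prop :=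
  ∀ g : W ⟶ X, ∃ ℓ : W ⟶ P, ℓ ≫ p = g

lemma exists_isRightApproximation_biproduct {k : Type w} [Field k] [Linear k C] (W X : C)
    [FiniteDimensional k (W ⟶ X)] :
    ∃ (n : ℕ) (p : (⨁ fun _ : Fin n => W) ⟶ X), IsRightApproximation W p := by
  let b := Module.finBasis k (W ⟶ X)
  refine ⟨_, biproduct.desc fun i => b i, fun g => ⟨biproduct.lift fun i => b.repr g i • 𝟙 W, ?_⟩⟩
  simp [biproduct.lift_desc, b.sum_repr g]

end Add

section Shift

variable {C : Type u} [Category.{v} C] [Preadditive C] [HasShift C ℤ]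

/-- `Hom(A, Y⟦j⟧)` plays the role of the cohomology `H^j(Y)`. -/
def CohomVanishes (A : C) (j : ℤ) (Y : C) : Prop := ∀ f : A ⟶ Y⟦j⟧, f = 0

lemma cohomVanishes_shift_iff {A Y : C} {a j j' : ℤ} (h : a + j = j') :
    CohomVanishes A j (Y⟦a⟧) ↔ CohomVanishes A j' Y := by
  let e := (shiftFunctorAdd' C a j j' h).app Y
  refine ⟨fun hY f => ?_, fun hY f => ?_⟩
  · rw [← cancel_mono e.hom, zero_comp]
    exact hY _
  · rw [← cancel_mono e.inv, zero_comp]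
    exact hY _

end Shift

section Pretriangulated

variable {C : Type u} [Category.{v} C] [Preadditive C] [HasZeroObject C] [HasShift C ℤ]
  [∀ n : ℤ, (shiftFunctor C n).Additive] [Pretriangulated C]

lemma CohomVanishes.obj₂ {T : Triangle C} (hT : T ∈ distTriang C) {A : C} {j : ℤ}
    (h₁ : CohomVanishes A j T.obj₁) (h₃ : CohomVanishes A j T.obj₃) :
    CohomVanishes A j T.obj₂ := by
  intro f
  obtain ⟨g, rfl⟩ := Triangle.coyoneda_exact₂ _ (Triangle.shift_distinguished T hT j) f (h₃ _)
  rw [show g = 0 from h₁ g]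
  exact zero_comp

lemma CohomVanishes.obj₁_of_isRightApproximation {T : Triangle C} (hT : T ∈ distTriang C)
    {A : C} (hT₂ : IsRightApproximation A T.mor₂) (h₂ : CohomVanishes A 1 T.obj₂) :
    CohomVanishes A 1 T.obj₁ := by
  intro φ
  obtain ⟨g, rfl⟩ := Triangle.coyoneda_exact₁ T hT φ (h₂ _)
  obtain ⟨ℓ, rfl⟩ := hT₂ g
  rw [assoc, comp_distTriang_mor_zero₂₃ T hT, comp_zero]

lemma le_of_inAdd [HasFiniteBiproducts C] (t : TStructure C) {n : ℤ} {W X : C}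
    (hW : t.le n W) (hX : inAdd W X) : t.le n X := by
  have : t.IsLE W n := ⟨hW⟩
  rw [t.le_iff_isLE, t.isLE_iff_orthogonal n (n + 1) rfl]
  exact fun Y f _ => hX.eq_zero_of_hom_from (fun g => t.zero g n (n + 1)) f

lemma ge_of_inAdd [HasFiniteBiproducts C] (t : TStructure C) {n : ℤ} {W X : C}
    (hW : t.ge n W) (hX : inAdd W X) : t.ge n X := by
  have : t.IsGE W n := ⟨hW⟩
  rw [t.ge_iff_isGE, t.isGE_iff_orthogonal (n - 1) n (by omega)]
  exact fun Y f _ => hX.eq_zero_of_hom_to (fun g => t.zero g (n - 1) n) f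

end Pretriangulated

namespace DGSetup

variable {k : Type w} [Field k] {C : Type u} [Category.{v} C] [Preadditive C]
  [HasZeroObject C] [HasShift C ℤ] [∀ n : ℤ, (shiftFunctor C n).Additive]
  [Pretriangulated C] [Linear k C] (S : DGSetup k C)

lemma cohomVanishes_of_le {Y : C} {n j : ℤ} (hY : S.t.le n Y) (hj : n < j) :
    CohomVanishes S.A j Y :=
  (cohomVanishes_shift_iff (sub_add_cancel j 1)).1 <| S.A_derived_projective _ <|
    S.t.le_monotone (by omega : n - (j - 1) ≤ 0) _ (S.t.le_shift n (j - 1) _ (by omega) Y hY)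

lemma cohomVanishes_of_ge {Y : C} {n j : ℤ} (hY : S.t.ge n Y) (hj : j < n) :
    CohomVanishes S.A j Y := fun f =>
  S.t.zero_of_isLE_of_isGE f 0 (n - j) (by omega) ⟨S.connective⟩
    ⟨S.t.ge_shift n j (n - j) (by omega) Y hY⟩

lemma isZero_of_cohomVanishes {Y : C} (h : ∀ j, CohomVanishes S.A j Y) : IsZero Y :=
  S.generates Y fun n f => (shiftFunctor C (-n)).map_injective <| by
    rw [Functor.map_zero,
      ← cancel_epi ((shiftFunctorCompIsoId C n (-n) (add_neg_cancel n)).inv.app S.A), comp_zero]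
    exact h (-n) _

lemma le_of_cohomVanishes {Y : C} (n : ℤ) (h : ∀ j, n < j → CohomVanishes S.A j Y) :
    S.t.le n Y := by
  obtain ⟨Y', Y'', hY', hY'', f, g, δ, hT⟩ := S.t.exists_triangle Y n (n + 1) rfl
  have hY''_zero : IsZero Y'' := by
    refine S.isZero_of_cohomVanishes fun j => ?_
    by_cases hj : n < j
    · exact CohomVanishes.obj₂ (rot_of_distTriang _ hT) (h j hj)
        ((cohomVanishes_shift_iff rfl).2 (S.cohomVanishes_of_le hY' (by omega)))
    · exact S.cohomVanishes_of_ge hY'' (by omega)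
  have : IsIso f := (Triangle.isZero₃_iff_isIso₁ _ hT).1 hY''_zero
  exact (S.t.le n).prop_of_iso (asIso f) hY'

variable {d : ℕ}

lemma mem_Hd_of_inAdd [HasFiniteBiproducts C] (hA : S.A ∈ Hd S.t d) {P : C}
    (hP : inAdd S.A P) : P ∈ Hd S.t d :=
  ⟨le_of_inAdd S.t hA.1 hP, ge_of_inAdd S.t hA.2 hP⟩

lemma projOn_Hd_of_inAdd [HasFiniteBiproducts C] {P : C} (hP : inAdd S.A P) :
    projOn (Hd S.t d) P :=
  fun _ hX f => hP.eq_zero_of_hom_from (S.A_derived_projective _ hX.1) f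

lemma obj₁_mem_Hd_of_isRightApproximation {T : Triangle C} (hT : T ∈ distTriang C)
    (h₂ : T.obj₂ ∈ Hd S.t d) (h₃ : T.obj₃ ∈ Hd S.t d) (hT₂ : IsRightApproximation S.A T.mor₂) :
    T.obj₁ ∈ Hd S.t d := by
  have hT' := inv_rot_of_distTriang _ hT
  constructor
  · refine S.le_of_cohomVanishes 0 fun j hj => ?_
    obtain rfl | hj := eq_or_lt_of_le (show 1 ≤ j by omega)
    · exact CohomVanishes.obj₁_of_isRightApproximation hT hT₂
        (S.cohomVanishes_of_le h₂.1 one_pos)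
    · exact CohomVanishes.obj₂ hT'
        ((cohomVanishes_shift_iff rfl).2 (S.cohomVanishes_of_le h₃.1 (by omega)))
        (S.cohomVanishes_of_le h₂.1 (by omega))
  · have h₃' : S.t.ge (1 - d) (T.obj₃⟦(-1 : ℤ)⟧) := S.t.ge_antitone (by omega) _
      (S.t.ge_shift (1 - d) (-1) (2 - d) (by omega) _ h₃.2)
    exact (S.t.ge_iff_isGE _ _).2 (S.t.isGE₂ _ hT' _ ⟨h₃'⟩ ⟨h₂.2⟩)

lemma exists_deflation_of_mem_Hd [HasFiniteBiproducts C] (hA : S.A ∈ Hd S.t d) {X : C}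
    (hX : X ∈ Hd S.t d) :
    ∃ (P : C) (_ : inAdd S.A P) (_ : P ∈ Hd S.t d) (p : P ⟶ X), isDeflation (Hd S.t d) p := by
  have := S.homFinite S.A X
  obtain ⟨n, p, hp⟩ := exists_isRightApproximation_biproduct (k := k) S.A X
  have hP : inAdd S.A (⨁ fun _ : Fin n => S.A) := ⟨n, 𝟙 _, 𝟙 _, id_comp _⟩
  have hP' := S.mem_Hd_of_inAdd hA hP
  obtain ⟨L, f, δ, hT⟩ := distinguished_cocone_triangle₁ p
  exact ⟨_, hP, hP', p, L, S.obj₁_mem_Hd_of_isRightApproximation hT hP' hX hp, f, δ, hT⟩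

lemma inAdd_of_projOn [HasFiniteBiproducts C] (hA : S.A ∈ Hd S.t d) {P : C}
    (hP : P ∈ Hd S.t d) (hproj : projOn (Hd S.t d) P) : inAdd S.A P := by
  obtain ⟨Q, hQ, -, q, L, hL, f, δ, hT⟩ := S.exists_deflation_of_mem_Hd hA hP
  have : Epi q := Triangle.epi₂ _ hT (hproj L hL δ)
  have := isSplitEpi_of_epi q
  exact hQ.of_isSplitEpi q

end DGSetup

variable {C : Type u} [Category.{v} C] [Preadditive C] [HasZeroObject C]
  [HasShift C ℤ] [∀ n : ℤ, (shiftFunctor C n).Additive] [Pretriangulated C]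
  [HasFiniteBiproducts C] [HasBinaryBiproducts C]
  {k : Type w} [Field k] [Linear k C]

theorem stmt8_general (S : DGSetup k C) (d : ℕ) (hA : S.A ∈ Hd S.t d) :
    (∀ X ∈ Hd S.t d, ∃ (P : C) (_ : inAdd S.A P) (_ : P ∈ Hd S.t d) (p : P ⟶ X),
      isDeflation (Hd S.t d) p) ∧
    (∀ P : C, (P ∈ Hd S.t d ∧ projOn (Hd S.t d) P) ↔ inAdd S.A P) :=
  ⟨fun _ hX => S.exists_deflation_of_mem_Hd hA hX,
    fun _ => ⟨fun ⟨hP, hproj⟩ => S.inAdd_of_projOn hA hP hproj,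
      fun hP => ⟨S.mem_Hd_of_inAdd hA hP, S.projOn_Hd_of_inAdd hP⟩⟩⟩

/-- For `A ∈ H^d`, the extended heart `H^d` has enough projectives and
its projective objects are exactly `add(A)`. -/
theorem stmt8 (S : DGSetup k C) (d : ℕ) (hd : 1 ≤ d) (hA : S.A ∈ Hd S.t d) :
    (∀ X ∈ Hd S.t d, ∃ (P : C) (_ : inAdd S.A P) (_ : P ∈ Hd S.t d) (p : P ⟶ X),
      isDeflation (Hd S.t d) p) ∧
    (∀ P : C, (P ∈ Hd S.t d ∧ projOn (Hd S.t d) P) ↔ inAdd S.A P) :=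
  stmt8_general S d hA

end Paper
end

section
/- Let A be a proper connective dg algebra and d ≥ 1 with A ∈ H^d := D^fd(A)^{≤0} ∩ D^fd(A)^{>-d}. Then H^d has enough injectives as an extriangulated category, and the injective objects are exactly add(D(A)[d-1]). -/
open CategoryTheory Category Limits Pretriangulated Triangulated ZeroObject

universe w v u

namespace Paper

/-
Serre duality `Hom(A, M) ≅ D Hom(M, DA)` makes composition `Hom(A, M) × Hom(M, DA) → Hom(A, DA)`
nondegenerate on both sides, and this survives shifting. Since the shifts `A⟦n⟧` detect the
t-structure (`A` is a connective, derived projective generator), it gives `0 ≤ DA ≤ d - 1`, so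
`DA⟦d-1⟧ ∈ H^d`, and `Hom(X, DA⟦d-1⟧⟦1⟧) = 0` for `X ∈ H^d` because `Hom(A⟦d-1⟧, X⟦-1⟧) = 0`.
For `X ∈ H^d`, a basis of the finite-dimensional space `Hom(X, DA⟦d-1⟧)` gives a map
`ι : X ⟶ DA⟦d-1⟧^m` that is injective on `Hom(A⟦d-1⟧, -)`; this and `Hom(A⟦n⟧, DA⟦d-1⟧) = 0`
for `n ≥ d` show that `Hom(A⟦n⟧, cone ι) = 0` for `n ≥ d`, i.e. `cone ι ∈ H^d`. When `X` is
injective this triangle splits, so `X ∈ add(DA⟦d-1⟧)`.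
-/

section ZeroMorphisms

variable {C : Type u} [Category.{v} C] [HasZeroMorphisms C]

structure NondegeneratePairing (P Q : C) : Prop where
  left : ∀ ⦃M : C⦄ (u : P ⟶ M), (∀ w : M ⟶ Q, u ≫ w = 0) → u = 0
  right : ∀ ⦃M : C⦄ (w : M ⟶ Q), (∀ u : P ⟶ M, u ≫ w = 0) → w = 0

theorem NondegeneratePairing.map {D : Type*} [Category D] [HasZeroMorphisms D] {P Q : C}
    (h : NondegeneratePairing P Q) (F : C ⥤ D) [F.IsEquivalence] :
    NondegeneratePairing (F.obj P) (F.obj Q) where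
  left M u hu := by
    let e := F.objObjPreimageIso M
    suffices F.preimage (u ≫ e.inv) = 0 by
      refine (cancel_mono e.inv).mp ?_
      rw [zero_comp, ← F.map_preimage (u ≫ e.inv), this, F.map_zero]
    refine h.left _ fun w => F.map_injective ?_
    simpa using hu (e.inv ≫ F.map w)
  right M w hw := by
    let e := F.objObjPreimageIso M
    suffices F.preimage (e.hom ≫ w) = 0 by
      refine (cancel_epi e.hom).mp ?_
      rw [comp_zero, ← F.map_preimage (e.hom ≫ w), this, F.map_zero]
    refine h.right _ fun u => F.map_injective ?_
    simpa using hw (F.map u ≫ e.hom)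

theorem eq_zero_of_comp_map_eq_zero {D : Type*} [Category D] [HasZeroMorphisms D]
    (F : C ⥤ D) [F.Full] [F.Faithful] [F.PreservesZeroMorphisms] {P X Y : C} {ι : X ⟶ Y}
    (hι : ∀ u : P ⟶ X, u ≫ ι = 0 → u = 0) (α : F.obj P ⟶ F.obj X) (hα : α ≫ F.map ι = 0) :
    α = 0 := by
  rw [← F.map_preimage α, hι (F.preimage α) (F.map_injective (by simpa using hα)), F.map_zero]

end ZeroMorphisms

section Linear

variable {k : Type w} [Field k] {C : Type u} [Category.{v} C] [Preadditive C] [Linear k C]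

theorem NondegeneratePairing.of_serre {P Q : C}
    (serre : ∀ M : C, (P ⟶ M) ≃ₗ[k] Module.Dual k (M ⟶ Q))
    (serre_nat : ∀ {M N : C} (g : M ⟶ N) (u : P ⟶ M) (w : N ⟶ Q),
      serre M u (g ≫ w) = serre N (u ≫ g) w) :
    NondegeneratePairing P Q := by
  have pairing : ∀ {M : C} (u : P ⟶ M) (w : M ⟶ Q), serre M u w = serre Q (u ≫ w) (𝟙 Q) :=
    fun u w => by simpa using serre_nat w u (𝟙 Q)
  refine ⟨fun M u hu => ?_, fun M w hw => ?_⟩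
  · refine (serre M).map_eq_zero_iff.mp (LinearMap.ext fun w => ?_)
    simp [pairing, hu]
  · refine (Module.forall_dual_apply_eq_zero_iff k w).mp fun φ => ?_
    obtain ⟨u, rfl⟩ := (serre M).surjective φ
    simp [pairing, hw]

variable [HasFiniteBiproducts C]

theorem NondegeneratePairing.exists_hom_biproduct_detecting {P Q : C}
    (h : NondegeneratePairing P Q) (M : C) [FiniteDimensional k (M ⟶ Q)] :
    ∃ (m : ℕ) (ι : M ⟶ ⨁ fun _ : Fin m => Q), ∀ u : P ⟶ M, u ≫ ι = 0 → u = 0 := by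
  let b := Module.finBasis k (M ⟶ Q)
  refine ⟨_, biproduct.lift b, fun u hu => h.left u fun w => ?_⟩
  have hb : Linear.leftComp k Q u = 0 := b.ext fun i => by
    simpa using congrArg (· ≫ biproduct.π _ i) hu
  exact LinearMap.congr_fun hb w

end Linear

section Additive

variable {C : Type u} [Category.{v} C] [Preadditive C] [HasFiniteBiproducts C]

theorem inAdd.eq_zero_of_forall_from {W I M : C} (hI : inAdd W I) (h : ∀ f : W ⟶ M, f = 0)
    (f : I ⟶ M) : f = 0 := by
  obtain ⟨n, s, p, hsp⟩ := hI
  have hp : p ≫ f = 0 := biproduct.hom_ext' _ _ fun j => by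
    simpa using h (biproduct.ι (fun _ => W) j ≫ p ≫ f)
  rw [← id_comp f, ← hsp, assoc, hp, comp_zero]

theorem inAdd.eq_zero_of_forall_to {W I X : C} (hI : inAdd W I) (h : ∀ f : X ⟶ W, f = 0)
    (f : X ⟶ I) : f = 0 := by
  obtain ⟨n, s, p, hsp⟩ := hI
  have hs : f ≫ s = 0 := biproduct.hom_ext _ _ fun j => by
    simpa using h (f ≫ s ≫ biproduct.π (fun _ => W) j)
  rw [← comp_id f, ← hsp, ← assoc, hs, zero_comp]

theorem inAdd_biproduct (W : C) (m : ℕ) : inAdd W (⨁ fun _ : Fin m => W) :=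
  ⟨m, 𝟙 _, 𝟙 _, comp_id _⟩

end Additive

section Shift

variable {C : Type u} [Category.{v} C] [Preadditive C] [HasShift C ℤ]
  [∀ n : ℤ, (shiftFunctor C n).Additive]

theorem shift_hom_eq_zero_of_forall (n : ℤ) {X Y : C} (h : ∀ g : X ⟶ Y⟦-n⟧, g = 0)
    (f : X⟦n⟧ ⟶ Y) : f = 0 := by
  let e := (shiftFunctorCompIsoId C n (-n) (add_neg_cancel n)).app X
  refine (shiftFunctor C (-n)).map_injective ((cancel_epi e.inv).mp ?_)
  rw [h (e.inv ≫ f⟦-n⟧'), Functor.map_zero, comp_zero]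

theorem hom_shift_eq_zero_of_forall (n : ℤ) {X Y : C} (h : ∀ g : X⟦-n⟧ ⟶ Y, g = 0)
    (f : X ⟶ Y⟦n⟧) : f = 0 := by
  let e := (shiftFunctorCompIsoId C n (-n) (add_neg_cancel n)).app Y
  refine (shiftFunctor C (-n)).map_injective ((cancel_mono e.hom).mp ?_)
  rw [h (f⟦-n⟧' ≫ e.hom), Functor.map_zero, zero_comp]

end Shift

section TStructure

variable {C : Type u} [Category.{v} C] [Preadditive C] [HasZeroObject C] [HasShift C ℤ]
  [∀ n : ℤ, (shiftFunctor C n).Additive] [Pretriangulated C] (t : TStructure C)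

theorem mem_Hd_iff (d : ℕ) (X : C) : X ∈ Hd t d ↔ t.IsLE X 0 ∧ t.IsGE X (1 - d) := by
  simp [Hd]

variable [HasFiniteBiproducts C]

theorem inAdd.isLE {W I : C} (hI : inAdd W I) (n : ℤ) [t.IsLE W n] : t.IsLE I n :=
  (t.isLE_iff_orthogonal n (n + 1) rfl I).mpr fun _ f _ =>
    hI.eq_zero_of_forall_from (fun g => t.zero g n (n + 1)) f

theorem inAdd.isGE {W I : C} (hI : inAdd W I) (n : ℤ) [t.IsGE W n] : t.IsGE I n :=
  (t.isGE_iff_orthogonal (n - 1) n (by lia) I).mpr fun _ f _ =>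
    hI.eq_zero_of_forall_to (fun g => t.zero g (n - 1) n) f

theorem inAdd.mem_Hd {d : ℕ} {W I : C} (hW : W ∈ Hd t d) (hI : inAdd W I) : I ∈ Hd t d := by
  rw [mem_Hd_iff] at hW ⊢
  obtain ⟨_, _⟩ := hW
  exact ⟨hI.isLE t 0, hI.isGE t _⟩

end TStructure

namespace DGSetup

variable {k : Type w} [Field k] {C : Type u} [Category.{v} C] [Preadditive C]
  [HasZeroObject C] [HasShift C ℤ] [∀ n : ℤ, (shiftFunctor C n).Additive]
  [Pretriangulated C] [Linear k C] (S : DGSetup k C)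

instance isLE_A : S.t.IsLE S.A 0 := ⟨S.connective⟩

theorem isLE_shift_A (n : ℤ) : S.t.IsLE (S.A⟦n⟧) (-n) := S.t.isLE_shift S.A 0 n (-n)

theorem A_hom_eq_zero_of_isLE {M : C} [S.t.IsLE M (-1)] (f : S.A ⟶ M) : f = 0 := by
  let e := (shiftFunctorCompIsoId C (-1 : ℤ) 1 (by norm_num)).app M
  have : S.t.IsLE (M⟦(-1 : ℤ)⟧) 0 := S.t.isLE_shift M (-1) (-1) 0
  refine (cancel_mono e.inv).mp ?_
  rw [zero_comp]
  exact S.A_derived_projective _ (S.t.le_of_isLE _ _) _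

theorem shift_A_hom_eq_zero_of_isLE (s : ℤ) {M : C} [S.t.IsLE M (-1 - s)] (f : S.A⟦s⟧ ⟶ M) :
    f = 0 :=
  have : S.t.IsLE (M⟦-s⟧) (-1) := S.t.isLE_shift M (-1 - s) (-s) (-1)
  shift_hom_eq_zero_of_forall s (fun g => S.A_hom_eq_zero_of_isLE g) f

theorem isGE_of_forall_shift_A_hom_eq_zero (b : ℤ) (Y : C)
    (h : ∀ n : ℤ, 1 - b ≤ n → ∀ f : S.A⟦n⟧ ⟶ Y, f = 0) : S.t.IsGE Y b := by
  rw [S.t.isGE_iff_isZero_truncLT_obj]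
  refine S.generates _ fun n φ => ?_
  rcases le_or_gt n (-b) with hn | hn
  · have := S.t.isLE_of_le ((S.t.truncLT b).obj Y) (b - 1) (-1 - n)
    exact S.shift_A_hom_eq_zero_of_isLE n φ
  · have := S.isLE_shift_A n
    have := S.t.isLE_of_le (S.A⟦n⟧) (-n) (b - 1)
    exact S.t.to_truncLT_obj_ext (by rw [h n (by lia) (φ ≫ _), zero_comp])

theorem isLE_of_forall_shift_A_hom_eq_zero (a : ℤ) (W : C)
    (h : ∀ n : ℤ, n < -a → ∀ f : S.A⟦n⟧ ⟶ W, f = 0) : S.t.IsLE W a := by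
  rw [S.t.isLE_iff_isZero_truncGE_obj a (a + 1) rfl]
  refine S.generates _ fun n φ => ?_
  rcases le_or_gt (-a) n with hn | hn
  · have := S.isLE_shift_A n
    exact S.t.zero φ (-n) (a + 1)
  · let T := (S.t.triangleLTGE (a + 1)).obj W
    have : S.t.IsLE T.obj₁ (-n) := S.t.isLE_truncLT_obj W (a + 1) (-n)
    have : S.t.IsLE (T.obj₁⟦(1 : ℤ)⟧) (-1 - n) := S.t.isLE_shift T.obj₁ (-n) 1 (-1 - n)
    obtain ⟨ψ, rfl⟩ := Triangle.coyoneda_exact₃ T (S.t.triangleLTGE_distinguished (a + 1) W) φ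
      (S.shift_A_hom_eq_zero_of_isLE n _)
    rw [h n hn ψ]
    exact zero_comp

theorem isGE_of_nondegeneratePairing {Q : C} (hQ : NondegeneratePairing S.A Q) :
    S.t.IsGE Q 0 := by
  refine S.isGE_of_forall_shift_A_hom_eq_zero 0 Q fun n hn f => hQ.right f fun u => ?_
  have := S.isLE_shift_A n
  have := S.t.isLE_of_le (S.A⟦n⟧) (-n) (-1)
  rw [S.A_hom_eq_zero_of_isLE u, zero_comp]

theorem isLE_of_nondegeneratePairing {Q : C} (hQ : NondegeneratePairing S.A Q) (b : ℤ)
    [S.t.IsGE S.A b] : S.t.IsLE Q (-b) := by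
  refine S.isLE_of_forall_shift_A_hom_eq_zero (-b) Q fun n hn f => hQ.right f fun u => ?_
  have : S.t.IsGE (S.A⟦n⟧) (b - n) := S.t.isGE_shift S.A b n (b - n)
  rw [S.t.zero u 0 (b - n), zero_comp]

variable {d : ℕ}

theorem shift_mem_Hd {Q : C} (hQ : NondegeneratePairing S.A Q) (hA : S.A ∈ Hd S.t d) :
    Q⟦(d : ℤ) - 1⟧ ∈ Hd S.t d := by
  have : S.t.IsGE S.A (1 - d) := ((mem_Hd_iff _ _ _).mp hA).2
  have := S.isGE_of_nondegeneratePairing hQ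
  have := S.isLE_of_nondegeneratePairing hQ (1 - d)
  rw [mem_Hd_iff]
  exact ⟨S.t.isLE_shift Q (-(1 - d)) _ 0, S.t.isGE_shift Q 0 _ _⟩

theorem shift_A_hom_eq_zero_of_comp_shift_map_eq_zero {X B : C} (ι : X ⟶ B)
    [S.t.IsGE X (1 - d)] (hι : ∀ u : S.A⟦(d : ℤ) - 1⟧ ⟶ X, u ≫ ι = 0 → u = 0)
    (n : ℤ) (hn : d ≤ n) (α : S.A⟦n⟧ ⟶ X⟦(1 : ℤ)⟧) (hα : α ≫ ι⟦(1 : ℤ)⟧' = 0) : α = 0 := by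
  rcases hn.eq_or_lt with rfl | hn
  · let e := (shiftFunctorAdd' C ((d : ℤ) - 1) 1 d (by lia)).app S.A
    have : e.inv ≫ α = 0 :=
      eq_zero_of_comp_map_eq_zero (shiftFunctor C (1 : ℤ)) hι _ (by rw [assoc, hα, comp_zero])
    rw [← e.hom_inv_id_assoc α, this, comp_zero]
  · have := S.isLE_shift_A n
    have : S.t.IsGE (X⟦(1 : ℤ)⟧) (-d) := S.t.isGE_shift X (1 - d) 1 (-d)
    exact S.t.zero α (-n) (-d)

theorem mem_Hd_of_distTriang {X B Y : C} {ι : X ⟶ B} {g : B ⟶ Y} {h : Y ⟶ X⟦(1 : ℤ)⟧}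
    (hT : Triangle.mk ι g h ∈ distTriang C) (hX : X ∈ Hd S.t d) (hB : B ∈ Hd S.t d)
    (hι : ∀ u : S.A⟦(d : ℤ) - 1⟧ ⟶ X, u ≫ ι = 0 → u = 0)
    (hBA : ∀ n : ℤ, d ≤ n → ∀ f : S.A⟦n⟧ ⟶ B, f = 0) : Y ∈ Hd S.t d := by
  rw [mem_Hd_iff] at hX hB ⊢
  obtain ⟨_, _⟩ := hX
  obtain ⟨_, _⟩ := hB
  have : S.t.IsLE (X⟦(1 : ℤ)⟧) (-1) := S.t.isLE_shift X 0 1 (-1)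
  have := S.t.isLE_of_le (X⟦(1 : ℤ)⟧) (-1) 0
  have h₃₁ : h ≫ ι⟦(1 : ℤ)⟧' = 0 := comp_distTriang_mor_zero₃₁ _ hT
  refine ⟨S.t.isLE₂ _ (rot_of_distTriang _ hT) 0 ‹_› ‹_›,
    S.isGE_of_forall_shift_A_hom_eq_zero _ Y fun n hn ψ => ?_⟩
  have hψ : ψ ≫ h = 0 := S.shift_A_hom_eq_zero_of_comp_shift_map_eq_zero ι hι n (by lia) _
    (by rw [assoc, h₃₁, comp_zero])
  obtain ⟨φ, rfl⟩ := Triangle.coyoneda_exact₃ _ hT ψ hψ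
  rw [hBA n (by lia) φ]
  exact zero_comp

variable [HasFiniteBiproducts C]

theorem injOn_Hd_of_inAdd {W I : C} (hW : NondegeneratePairing (S.A⟦(d : ℤ) - 1⟧) W)
    (hI : inAdd W I) : injOn (Hd S.t d) I := by
  intro X hX f
  have : S.t.IsGE X (1 - d) := ((mem_Hd_iff _ _ _).mp hX).2
  have : S.t.IsGE (X⟦(-1 : ℤ)⟧) (2 - d) := S.t.isGE_shift X (1 - d) (-1) (2 - d)
  have := S.isLE_shift_A ((d : ℤ) - 1)
  refine hom_shift_eq_zero_of_forall 1 (fun g => hI.eq_zero_of_forall_to (fun w => ?_) g) f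
  exact hW.right w fun u => by rw [S.t.zero u (-((d : ℤ) - 1)) (2 - d), zero_comp]

theorem exists_inflation_to_biproduct {W : C} (hW : W ∈ Hd S.t d)
    (hPW : NondegeneratePairing (S.A⟦(d : ℤ) - 1⟧) W) {X : C} (hX : X ∈ Hd S.t d) :
    ∃ (m : ℕ) (ι : X ⟶ ⨁ fun _ : Fin m => W), isInflation (Hd S.t d) ι := by
  have := S.homFinite X W
  obtain ⟨m, ι, hι⟩ := hPW.exists_hom_biproduct_detecting (k := k) X
  obtain ⟨Y, g, h, hT⟩ := distinguished_cocone_triangle ι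
  have hBA : ∀ n : ℤ, d ≤ n → ∀ f : S.A⟦n⟧ ⟶ ⨁ fun _ : Fin m => W, f = 0 := by
    intro n hn
    have := S.isLE_shift_A n
    have := S.t.isLE_of_le (S.A⟦n⟧) (-n) (-1 - ((d : ℤ) - 1))
    refine (inAdd_biproduct W m).eq_zero_of_forall_to fun w => hPW.right w fun u => ?_
    rw [S.shift_A_hom_eq_zero_of_isLE _ u, zero_comp]
  exact ⟨m, ι, Y, S.mem_Hd_of_distTriang hT hX ((inAdd_biproduct W m).mem_Hd S.t hW) hι hBA,
    g, h, hT⟩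

end DGSetup

variable {C : Type u} [Category.{v} C] [Preadditive C] [HasZeroObject C]
  [HasShift C ℤ] [∀ n : ℤ, (shiftFunctor C n).Additive] [Pretriangulated C]
  [HasFiniteBiproducts C] [HasBinaryBiproducts C]
  {k : Type w} [Field k] [Linear k C]

theorem stmt9_general (S : DGSetup k C) (DA : C)
    (serre : ∀ M : C, (S.A ⟶ M) ≃ₗ[k] Module.Dual k (M ⟶ DA))
    (serre_nat : ∀ {M N : C} (g : M ⟶ N) (u : S.A ⟶ M) (w : N ⟶ DA),
      serre M u (g ≫ w) = serre N (u ≫ g) w)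
    (d : ℕ) (hA : S.A ∈ Hd S.t d) :
    (∀ X ∈ Hd S.t d, ∃ (I : C) (_ : inAdd (DA⟦(d : ℤ) - 1⟧) I) (_ : I ∈ Hd S.t d)
      (ι : X ⟶ I), isInflation (Hd S.t d) ι) ∧
    (∀ I : C, (I ∈ Hd S.t d ∧ injOn (Hd S.t d) I) ↔ inAdd (DA⟦(d : ℤ) - 1⟧) I) := by
  have hQ := NondegeneratePairing.of_serre serre serre_nat
  have hW := S.shift_mem_Hd hQ hA
  have hPW := hQ.map (shiftFunctor C ((d : ℤ) - 1))
  refine ⟨fun X hX => ?_, fun I => ⟨fun ⟨hI, hinj⟩ => ?_,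
    fun hI => ⟨hI.mem_Hd S.t hW, S.injOn_Hd_of_inAdd hPW hI⟩⟩⟩
  · obtain ⟨m, ι, hι⟩ := S.exists_inflation_to_biproduct hW hPW hX
    exact ⟨_, inAdd_biproduct _ m, (inAdd_biproduct _ m).mem_Hd S.t hW, ι, hι⟩
  · obtain ⟨m, ι, Y, hY, g, h, hT⟩ := S.exists_inflation_to_biproduct hW hPW hI
    have : Mono ι := Triangle.mono₁ _ hT (hinj Y hY h)
    have := isSplitMono_of_mono ι
    exact ⟨m, ι, retraction ι, IsSplitMono.id ι⟩

/-- For `A ∈ H^d`, the extended heart `H^d` has enough injectives and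
its injective objects are exactly `add(D(A)⟦d-1⟧)`. -/
theorem stmt9 (S : DGSetup k C) (DA : C)
    (serre : ∀ M : C, (S.A ⟶ M) ≃ₗ[k] Module.Dual k (M ⟶ DA))
    (serre_nat : ∀ {M N : C} (g : M ⟶ N) (u : S.A ⟶ M) (w : N ⟶ DA),
      serre M u (g ≫ w) = serre N (u ≫ g) w)
    (d : ℕ) (hd : 1 ≤ d) (hA : S.A ∈ Hd S.t d) :
    (∀ X ∈ Hd S.t d, ∃ (I : C) (_ : inAdd (DA⟦(d : ℤ) - 1⟧) I) (_ : I ∈ Hd S.t d)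
      (ι : X ⟶ I), isInflation (Hd S.t d) ι) ∧
    (∀ I : C, (I ∈ Hd S.t d ∧ injOn (Hd S.t d) I) ↔ inAdd (DA⟦(d : ℤ) - 1⟧) I) :=
  stmt9_general S DA serre serre_nat d hA

end Paper
end
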